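/- Let q = AB be a query satisfying the zig-zag property. For every database D, every repair r of D and all facts a,b ∈ r with r ⊨ q(ab), either {a} ∈ Δ_2(q,D) or there exists a repair s of D such that q(s) ⊊ q(r). -/

import Mathlib

/- Consistent query answering framework: a single relation symbol of arity `n`
   whose first `l` positions form the primary key. Facts are `Fin n → Elem`,
   atoms are `Fin n → Var`. -/

namespace CQA

/-- Key-equality: the tuples of the first `l` entries coincide. -/
def keyEq (l : ℕ) {n : ℕ} {α : Type*} (s t : Fin n → α) : Prop :=
  ∀ i : Fin n, (i : ℕ) < l → s i = t i

/-- The set of entries occurring in the first `l` (key) positions of a tuple. -/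
def keySet (l : ℕ) {n : ℕ} {α : Type*} (t : Fin n → α) : Set α :=
  {x | ∃ i : Fin n, (i : ℕ) < l ∧ t i = x}

/-- The set of all entries of a tuple. -/
def varsSet {n : ℕ} {α : Type*} (t : Fin n → α) : Set α :=
  Set.range t

/-- A (two-atom, Boolean, self-join) query `q = AB` is a pair of atoms. -/
abbrev Query (n : ℕ) (Var : Type*) := (Fin n → Var) × (Fin n → Var)

variable {n : ℕ} {Elem Var : Type*}

/-- The pair of facts `(a, b)` matches the two atoms of `q` via a single assignment `μ`. -/
def solPair (q : Query n Var) (a b : Fin n → Elem) : Prop :=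
  ∃ μ : Var → Elem, (∀ i, μ (q.1 i) = a i) ∧ (∀ i, μ (q.2 i) = b i)

/-- `D ⊨ q(ab)` : `(a,b)` is a solution to `q` in `D`. -/
def Sol (q : Query n Var) (D : Set (Fin n → Elem)) (a b : Fin n → Elem) : Prop :=
  a ∈ D ∧ b ∈ D ∧ solPair q a b

/-- `D ⊨ q{ab}` : `(a,b)` or `(b,a)` is a solution to `q` in `D`. -/
def SolSym (q : Query n Var) (D : Set (Fin n → Elem)) (a b : Fin n → Elem) : Prop :=
  Sol q D a b ∨ Sol q D b a

/-- The set `q(D)` of solutions to `q` in `D`. -/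
def solSet (q : Query n Var) (D : Set (Fin n → Elem)) :
    Set ((Fin n → Elem) × (Fin n → Elem)) :=
  {p | Sol q D p.1 p.2}

/-- `D ⊨ q` : some solution to `q` exists in `D`. -/
def Sat (q : Query n Var) (D : Set (Fin n → Elem)) : Prop :=
  ∃ a b, Sol q D a b

/-- A database is consistent if it contains no two distinct key-equal facts. -/
def Consistent (l : ℕ) (D : Set (Fin n → Elem)) : Prop :=
  ∀ a ∈ D, ∀ b ∈ D, keyEq l a b → a = b

/-- `r` is a repair of `D` : a maximal consistent subset of `D`. -/
def Repair (l : ℕ) (D r : Set (Fin n → Elem)) : Prop :=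
  r ⊆ D ∧ Consistent l r ∧ ∀ s, r ⊆ s → s ⊆ D → Consistent l s → s = r

/-- `D ⊨ certain(q)` : all repairs of `D` satisfy `q`. -/
def Certain (l : ℕ) (q : Query n Var) (D : Set (Fin n → Elem)) : Prop :=
  ∀ r, Repair l D r → Sat q r

/-- The block of the fact `a` in `D`: all facts of `D` key-equal to `a`. -/
def Block (l : ℕ) (D : Set (Fin n → Elem)) (a : Fin n → Elem) : Set (Fin n → Elem) :=
  {b ∈ D | keyEq l a b}

/-- A `k`-set of `D`: at most `k` facts of `D`, at most one from each block. -/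
def kSet (l k : ℕ) (D S : Set (Fin n → Elem)) : Prop :=
  S ⊆ D ∧ S.Finite ∧ S.ncard ≤ k ∧ Consistent l S

/-- A collection `𝒮` of sets of facts is closed under the two rules defining `Δ_k(q,D)`:
  (i) every `k`-set satisfying `q` is in `𝒮`, and (ii) if for a `k`-set `S` there is
  a block of `D` each of whose facts `u` admits a subset `S' ⊆ S ∪ {u}` that is a
  `k`-set belonging to `𝒮`, then `S ∈ 𝒮`. -/
def DeltaClosed (l k : ℕ) (q : Query n Var) (D : Set (Fin n → Elem))
    (𝒮 : Set (Set (Fin n → Elem))) : Prop :=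
  (∀ S, kSet l k D S → Sat q S → S ∈ 𝒮) ∧
  (∀ S, kSet l k D S → (∃ x ∈ D, ∀ u ∈ D, keyEq l x u →
      ∃ S', S' ⊆ S ∪ {u} ∧ kSet l k D S' ∧ S' ∈ 𝒮) → S ∈ 𝒮)

/-- `Δ_k(q,D)`: the least collection of `k`-sets of `D` closed under the two rules
(the intersection of all closed collections). -/
def Delta (l k : ℕ) (q : Query n Var) (D : Set (Fin n → Elem)) :
    Set (Set (Fin n → Elem)) :=
  ⋂₀ {𝒮 | DeltaClosed l k q D 𝒮}

/-- `q = AB` is 2way-determined. -/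
def TwoWayDet (l : ℕ) (q : Query n Var) : Prop :=
  ¬ keySet l q.1 ⊆ keySet l q.2 ∧ ¬ keySet l q.2 ⊆ keySet l q.1 ∧
  keySet l q.1 ⊆ varsSet q.2 ∧ keySet l q.2 ⊆ varsSet q.1

/-- The zig-zag property of a query `q`, relative to databases over `Elem`. -/
def ZigZag (l : ℕ) (q : Query n Var) (Elem : Type*) : Prop :=
  ∀ D : Set (Fin n → Elem), D.Finite →
    ∀ a b b' c : Fin n → Elem, a ∈ D → b ∈ D → b' ∈ D → c ∈ D →
      ¬ keyEq l a c → a ≠ b → keyEq l b b' →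
      Sol q D a b → Sol q D c b' → Sol q D a b'

/-- `rkey(a, r)`: facts of `r` whose key entries are included in those of `a`. -/
def rkey (l : ℕ) (r : Set (Fin n → Elem)) (a : Fin n → Elem) : Set (Fin n → Elem) :=
  {c ∈ r | keySet l c ⊆ keySet l a}

open Classical in
/-- `g(e)`, the set of entries of the tuple `g̅(e)`, for `e` branching with `d, f`. -/
noncomputable def gSet (l : ℕ) (d e f : Fin n → Elem) : Set Elem :=
  if keySet l d ⊆ keySet l e ∧ ¬ keySet l f ⊆ keySet l e then keySet l d
  else if ¬ keySet l d ⊆ keySet l e ∧ keySet l f ⊆ keySet l e then keySet l f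
  else if keySet l d ⊆ keySet l f ∧ keySet l f ⊆ keySet l e then keySet l d
  else if keySet l f ⊆ keySet l d ∧ keySet l d ⊆ keySet l e then keySet l f
  else keySet l e

/-- A tripath of `q`: a database `Θ`, each of whose blocks has at most two facts,
whose blocks (indexed by `Fin m`) are arranged as a rooted tree with exactly one root
block and exactly two leaf blocks; the root block has the single fact `a(root)`, leaf
blocks have the single fact `b(leaf)`, all other blocks have exactly the two facts
`a(B) ≠ b(B)`; if `B` is the parent of `B'` then `Θ ⊨ q{a(B) b(B')}`; the (unique)
branching block `B` with its two children `B', B''` gives the center `d e f` =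
`b(B') a(B) b(B'')` with `(d,e)` and `(e,f)` distinct solutions; and `g(e)` is not
included in the key of the root fact nor of either leaf fact. -/
structure Tripath (l : ℕ) (q : Query n Var) (Θ : Set (Fin n → Elem)) where
  finite : Θ.Finite
  m : ℕ
  blk : Fin m → Set (Fin n → Elem)
  blk_is_block : ∀ i, ∃ x ∈ Θ, blk i = Block l Θ x
  blk_cover : Θ = ⋃ i, blk i
  blk_inj : Function.Injective blk
  blk_card : ∀ i, (blk i).ncard ≤ 2
  parent : Fin m → Option (Fin m)
  root : Fin m
  parent_root : parent root = none
  parent_ne_root : ∀ i, i ≠ root → ∃ j, parent i = some j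
  reach_root : ∀ i, Relation.ReflTransGen (fun x y => parent x = some y) i root
  leaf1 : Fin m
  leaf2 : Fin m
  leaf_ne : leaf1 ≠ leaf2
  leaf1_leaf : ∀ j, parent j ≠ some leaf1
  leaf2_leaf : ∀ j, parent j ≠ some leaf2
  leaves_eq : ∀ i, (∀ j, parent j ≠ some i) → i = leaf1 ∨ i = leaf2
  aFact : Fin m → (Fin n → Elem)
  bFact : Fin m → (Fin n → Elem)
  root_blk : blk root = {aFact root}
  leaf1_blk : blk leaf1 = {bFact leaf1}
  leaf2_blk : blk leaf2 = {bFact leaf2}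
  other_blk : ∀ i, i ≠ root → i ≠ leaf1 → i ≠ leaf2 →
    aFact i ≠ bFact i ∧ blk i = {aFact i, bFact i}
  adj_sol : ∀ i j, parent j = some i → SolSym q Θ (aFact i) (bFact j)
  branch : Fin m
  child1 : Fin m
  child2 : Fin m
  child_ne : child1 ≠ child2
  parent_child1 : parent child1 = some branch
  parent_child2 : parent child2 = some branch
  center_sol1 : Sol q Θ (bFact child1) (aFact branch)
  center_sol2 : Sol q Θ (aFact branch) (bFact child2)
  center_distinct : (bFact child1, aFact branch) ≠ (aFact branch, bFact child2)
  g_root : ¬ gSet l (bFact child1) (aFact branch) (bFact child2) ⊆ keySet l (aFact root)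
  g_leaf1 : ¬ gSet l (bFact child1) (aFact branch) (bFact child2) ⊆ keySet l (bFact leaf1)
  g_leaf2 : ¬ gSet l (bFact child1) (aFact branch) (bFact child2) ⊆ keySet l (bFact leaf2)

namespace Tripath

variable {l : ℕ} {q : Query n Var} {Θ : Set (Fin n → Elem)}

/-- The fact `d` of the center `def` of a tripath. -/
def dc (T : Tripath l q Θ) : Fin n → Elem := T.bFact T.child1
/-- The fact `e` of the center `def` of a tripath. -/
def ec (T : Tripath l q Θ) : Fin n → Elem := T.aFact T.branch
/-- The fact `f` of the center `def` of a tripath. -/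
def fc (T : Tripath l q Θ) : Fin n → Elem := T.bFact T.child2
/-- The root fact `u₀` of a tripath. -/
def u0 (T : Tripath l q Θ) : Fin n → Elem := T.aFact T.root
/-- The leaf fact `u₁` of a tripath. -/
def u1 (T : Tripath l q Θ) : Fin n → Elem := T.bFact T.leaf1
/-- The leaf fact `u₂` of a tripath. -/
def u2 (T : Tripath l q Θ) : Fin n → Elem := T.bFact T.leaf2

/-- The center of the tripath is a fork (`(f,d)` is not a solution). -/
def IsFork (T : Tripath l q Θ) : Prop := ¬ Sol q Θ T.fc T.dc

/-- The center of the tripath is a triangle (`(f,d)` is a solution). -/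
def IsTriangle (T : Tripath l q Θ) : Prop := Sol q Θ T.fc T.dc

/-- Variable-niceness witnessed by the elements `x, y, z`. -/
def VariableNiceWith (T : Tripath l q Θ) (x y z : Elem) : Prop :=
  x ∈ keySet l T.dc ∧ y ∈ keySet l T.ec ∧ z ∈ keySet l T.fc ∧
  ({x, y, z} : Set Elem) ∩ (keySet l T.u0 ∪ keySet l T.u1 ∪ keySet l T.u2) = ∅

/-- The tripath is variable-nice. -/
def VariableNice (T : Tripath l q Θ) : Prop := ∃ x y z, T.VariableNiceWith x y z

/-- The tripath is solution-nice: the only solutions to `q` in `Θ` are those between a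
parent block and a child block, plus possibly `(f, d)`. -/
def SolutionNice (T : Tripath l q Θ) : Prop :=
  ∀ a b, Sol q Θ a b →
    (∃ i j, T.parent j = some i ∧
      ((a = T.aFact i ∧ b = T.bFact j) ∨ (a = T.bFact j ∧ b = T.aFact i)))
    ∨ (a = T.fc ∧ b = T.dc)

/-- The tripath is nice. -/
def Nice (T : Tripath l q Θ) : Prop :=
  (∃ x y z : Elem, T.VariableNiceWith x y z ∧
    ∃ w ∈ ({x, y, z} : Set Elem),
      ∀ c ∈ Θ, c ≠ T.u0 → c ≠ T.u1 → c ≠ T.u2 → w ∈ keySet l c) ∧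
  T.SolutionNice ∧
  (∀ u ∈ ({T.u0, T.u1, T.u2} : Set (Fin n → Elem)),
    ∃ w ∈ keySet l u, ∀ c ∈ Θ, c ≠ u → w ∉ keySet l c)

end Tripath

/-- `D` contains a tripath of `q`: some subset of `D` is a tripath of `q`. -/
def ContainsTripath (l : ℕ) (q : Query n Var) (D : Set (Fin n → Elem)) : Prop :=
  ∃ Θ ⊆ D, Nonempty (Tripath l q Θ)

/-- `q` admits a fork-tripath (over databases with elements in `Elem`). -/
def AdmitsForkTripath (l : ℕ) (q : Query n Var) (Elem : Type*) : Prop :=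
  ∃ D : Set (Fin n → Elem), D.Finite ∧ ∃ Θ ⊆ D, ∃ T : Tripath l q Θ, T.IsFork

/-- `q` admits a triangle-tripath (over databases with elements in `Elem`). -/
def AdmitsTriangleTripath (l : ℕ) (q : Query n Var) (Elem : Type*) : Prop :=
  ∃ D : Set (Fin n → Elem), D.Finite ∧ ∃ Θ ⊆ D, ∃ T : Tripath l q Θ, T.IsTriangle

/-- `q` admits a tripath (over databases with elements in `Elem`). -/
def AdmitsTripath (l : ℕ) (q : Query n Var) (Elem : Type*) : Prop :=
  ∃ D : Set (Fin n → Elem), D.Finite ∧ ContainsTripath l q D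

/-- Edges of the solution graph `G(D,q)`: distinct facts `a, b` of `D` with `D ⊨ q{ab}`. -/
def gEdge (q : Query n Var) (D : Set (Fin n → Elem)) (a b : Fin n → Elem) : Prop :=
  a ≠ b ∧ a ∈ D ∧ b ∈ D ∧ SolSym q D a b

/-- The connected component of the fact `a` in the solution graph `G(D,q)`. -/
def gComp (q : Query n Var) (D : Set (Fin n → Elem)) (a : Fin n → Elem) :
    Set (Fin n → Elem) :=
  {b ∈ D | Relation.ReflTransGen (gEdge q D) a b}

/-- `C` is a quasi-clique (of the solution graph of `D`): any two non-key-equal facts of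
`C` are joined by an edge. -/
def QuasiClique (l : ℕ) (q : Query n Var) (D : Set (Fin n → Elem))
    (C : Set (Fin n → Elem)) : Prop :=
  ∀ a ∈ C, ∀ b ∈ C, ¬ keyEq l a b → SolSym q D a b

open Classical in
/-- `clique(a)`: the connected component of `a` in `G(D,q)` if it is a quasi-clique, and
`{a}` otherwise. -/
noncomputable def cliqueOf (l : ℕ) (q : Query n Var) (D : Set (Fin n → Elem))
    (a : Fin n → Elem) : Set (Fin n → Elem) :=
  if QuasiClique l q D (gComp q D a) then gComp q D a else {a}

/-- Edges of the bipartite graph `H(D,q)`: between a block `B` of `D` and a set `c` of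
the form `clique(y)`, when `B` contains a fact `a ∈ c` with `(a,a)` not a solution. -/
def HEdge (l : ℕ) (q : Query n Var) (D : Set (Fin n → Elem))
    (B c : Set (Fin n → Elem)) : Prop :=
  (∃ x ∈ D, B = Block l D x) ∧ (∃ y ∈ D, c = cliqueOf l q D y) ∧
  ∃ a ∈ B, a ∈ c ∧ ¬ Sol q D a a

/-- `H(D,q)` admits a matching saturating the set `V₁` of blocks of `D`: an injective
assignment of an `H`-edge to every block. -/
def SaturatingMatching (l : ℕ) (q : Query n Var) (D : Set (Fin n → Elem)) : Prop :=
  ∃ M : Set (Fin n → Elem) → Set (Fin n → Elem),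
    (∀ x ∈ D, HEdge l q D (Block l D x) (M (Block l D x))) ∧
    (∀ x ∈ D, ∀ y ∈ D, M (Block l D x) = M (Block l D y) → Block l D x = Block l D y)

/-- `D` is a clique-database for `q`: every connected component of `G(D,q)` is a
quasi-clique. -/
def CliqueDB (l : ℕ) (q : Query n Var) (D : Set (Fin n → Elem)) : Prop :=
  ∀ a ∈ D, QuasiClique l q D (gComp q D a)

/-- `q` is a clique-query: every database (over `Elem`) is a clique-database for `q`. -/
def CliqueQuery (l : ℕ) (q : Query n Var) (Elem : Type*) : Prop :=
  ∀ D : Set (Fin n → Elem), D.Finite → CliqueDB l q D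

/-- One step of `q`-connectedness between (the blocks of) two facts of `D`:
either they are in the same block, or some fact of the block of `x` and some fact
of the block of `y` form a solution. -/
def qConnRel (l : ℕ) (q : Query n Var) (D : Set (Fin n → Elem))
    (x y : Fin n → Elem) : Prop :=
  keyEq l x y ∨ ∃ a b, a ∈ Block l D x ∧ b ∈ Block l D y ∧ SolSym q D a b

/-- The blocks of `x` and of `y` are `q`-connected in `D`
(reflexive-symmetric-transitive closure). -/
def qConn (l : ℕ) (q : Query n Var) (D : Set (Fin n → Elem))
    (x y : Fin n → Elem) : Prop :=
  Relation.EqvGen (qConnRel l q D) x y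

/-- The `q`-connected component of (the block of) the fact `x` in `D`. -/
def qComponent (l : ℕ) (q : Query n Var) (D : Set (Fin n → Elem))
    (x : Fin n → Elem) : Set (Fin n → Elem) :=
  {y ∈ D | qConn l q D x y}

/-! If `{a} ∉ Δ₂(q,D)`, rule (ii) of `Δ₂` applied to the block of `b` yields a fact `u ∼ b`
with `{a, u} ∉ Δ₂`, so that `(a, u)` is not a solution. Replacing `b` by `u` in `r` may create
new solutions `(u, y)`; each time, rule (ii) applied to `{a, u}` and the block of `y` yields a
replacement `v ∼ y` with `{a, v}, {u, v} ∉ Δ₂`. Since `D` is finite, a stage is reached where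
no replaced fact forms a solution with a kept fact; then the zig-zag property shows that no
solution of the new repair ends in a replaced fact, so its solutions are solutions of `r`,
while `(a, b)` is lost. -/

namespace keyEq

variable {l : ℕ} {α : Type*} {s t u : Fin n → α}

theorem refl (l : ℕ) (s : Fin n → α) : keyEq l s s := fun _ _ => rfl

theorem symm (h : keyEq l s t) : keyEq l t s := fun i hi => (h i hi).symm

theorem trans (h₁ : keyEq l s t) (h₂ : keyEq l t u) : keyEq l s u :=
  fun i hi => (h₁ i hi).trans (h₂ i hi)

end keyEq

variable {l k : ℕ} {q : Query n Var} {D r N S : Set (Fin n → Elem)} {a b v x y z : Fin n → Elem}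

theorem consistent_singleton (l : ℕ) (x : Fin n → Elem) : Consistent l {x} :=
  fun _ hc _ hd _ => hc.trans hd.symm

theorem kSet_singleton (hk : 1 ≤ k) (hx : x ∈ D) : kSet l k D {x} :=
  ⟨Set.singleton_subset_iff.2 hx, Set.finite_singleton x, by simpa using hk,
    consistent_singleton l x⟩

theorem kSet_pair (hk : 2 ≤ k) (hx : x ∈ D) (hy : y ∈ D) (hxy : ¬ keyEq l x y) :
    kSet l k D {x, y} := by
  refine ⟨Set.insert_subset hx (Set.singleton_subset_iff.2 hy), Set.toFinite _,
    (Set.ncard_insert_le x {y}).trans (by simpa using hk), ?_⟩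
  rintro c (rfl | rfl) d (rfl | rfl) h
  · rfl
  · exact absurd h hxy
  · exact absurd h.symm hxy
  · rfl

theorem deltaClosed_delta (l k : ℕ) (q : Query n Var) (D : Set (Fin n → Elem)) :
    DeltaClosed l k q D (Delta l k q D) := by
  refine ⟨fun S hS hsat => Set.mem_sInter.2 fun 𝒮 h𝒮 => h𝒮.1 S hS hsat, ?_⟩
  rintro S hS ⟨x, hx, hblock⟩
  refine Set.mem_sInter.2 fun 𝒮 h𝒮 => h𝒮.2 S hS ⟨x, hx, fun u hu hxu => ?_⟩
  obtain ⟨S', hS'u, hS', hS'Δ⟩ := hblock u hu hxu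
  exact ⟨S', hS'u, hS', Set.mem_sInter.1 hS'Δ 𝒮 h𝒮⟩

theorem mem_delta_of_sat (hS : kSet l k D S) (hsat : Sat q S) : S ∈ Delta l k q D :=
  (deltaClosed_delta l k q D).1 S hS hsat

theorem not_solPair_of_pair_not_mem_delta (hS : kSet l k D {x, y})
    (hΔ : {x, y} ∉ Delta l k q D) : ¬ solPair q x y :=
  fun h => hΔ (mem_delta_of_sat hS ⟨x, y, by simp, by simp, h⟩)

theorem exists_keyEq_forall_not_mem_delta (hS : kSet l k D S) (hΔ : S ∉ Delta l k q D)
    (hx : x ∈ D) :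
    ∃ v ∈ D, keyEq l x v ∧ ∀ S' ⊆ S ∪ {v}, kSet l k D S' → S' ∉ Delta l k q D := by
  by_contra! h
  exact hΔ ((deltaClosed_delta l k q D).2 S hS ⟨x, hx, fun u hu hxu => h u hu hxu⟩)

theorem Repair.exists_mem_keyEq (hr : Repair l D r) (hx : x ∈ D) : ∃ e ∈ r, keyEq l e x := by
  by_contra! h
  have hcons : Consistent l (insert x r) := by
    rintro c (rfl | hc) d (rfl | hd) hcd
    · rfl
    · exact absurd hcd.symm (h d hd)
    · exact absurd hcd (h c hc)
    · exact hr.2.1 c hc d hd hcd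
  have hxr := hr.2.2 _ (Set.subset_insert x r) (Set.insert_subset hx hr.1) hcons
  exact h x (hxr ▸ Set.mem_insert x r) (keyEq.refl l x)

def replace (l : ℕ) (r N : Set (Fin n → Elem)) : Set (Fin n → Elem) :=
  {z ∈ r | ∀ v ∈ N, ¬ keyEq l z v} ∪ N

theorem Repair.replace (hr : Repair l D r) (hN : N ⊆ D) (hNc : Consistent l N) :
    Repair l D (replace l r N) := by
  refine ⟨Set.union_subset (fun z hz => hr.1 hz.1) hN, ?_, ?_⟩
  · rintro c (⟨hc, hcN⟩ | hc) d (⟨hd, hdN⟩ | hd) hcd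
    · exact hr.2.1 c hc d hd hcd
    · exact absurd hcd (hcN d hd)
    · exact absurd hcd.symm (hdN c hc)
    · exact hNc c hc d hd hcd
  · intro t hst htD htc
    refine Set.Subset.antisymm (fun d hd => ?_) hst
    obtain ⟨e, he, hed⟩ := hr.exists_mem_keyEq (htD hd)
    by_cases heN : ∃ v ∈ N, keyEq l e v
    · obtain ⟨v, hv, hev⟩ := heN
      exact htc v (hst (Or.inr hv)) d hd (hev.symm.trans hed) ▸ Or.inr hv
    · have hes : e ∈ CQA.replace l r N := Or.inl ⟨he, fun v hv hev => heN ⟨v, hv, hev⟩⟩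
      exact htc e (hst hes) d hd hed ▸ hes

/-- The witness `w` of the replacement `v` of `z` is what lets the zig-zag property rule out
solutions ending in `v`. -/
structure IsReplacement (l : ℕ) (q : Query n Var) (D r : Set (Fin n → Elem))
    (a : Fin n → Elem) (N : Set (Fin n → Elem)) : Prop where
  subset : N ⊆ D
  consistent : Consistent l N
  not_keyEq : ∀ v ∈ N, ¬ keyEq l a v
  not_mem_delta : ∀ v ∈ N, {a, v} ∉ Delta l 2 q D
  witness : ∀ v ∈ N, ∃ w ∈ insert a N, ∃ z ∈ r,
    keyEq l z v ∧ solPair q w z ∧ ¬ solPair q w v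

namespace IsReplacement

variable (hN : IsReplacement l q D r a N)
include hN

theorem not_mem_of_mem (hr : Consistent l r) (hv : v ∈ N) : v ∉ r := by
  obtain ⟨w, -, z, hz, hzv, hwz, hwv⟩ := hN.witness v hv
  exact fun hvr => hwv (hr z hz v hvr hzv ▸ hwz)

theorem not_mem_replace (hr : Consistent l r) (hz : z ∈ r) (hv : v ∈ N) (hzv : keyEq l z v) :
    z ∉ replace l r N := by
  rintro (⟨-, hzN⟩ | hzN)
  · exact hzN v hv hzv
  · exact hN.not_mem_of_mem hr hzN hz

theorem insert_subset_replace (ha : a ∈ r) : insert a N ⊆ replace l r N :=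
  Set.insert_subset (Or.inl ⟨ha, hN.not_keyEq⟩) Set.subset_union_right

theorem not_solPair_replace (hzz : ZigZag l q Elem) (hD : D.Finite) (hr : Repair l D r)
    (ha : a ∈ r) (hx : x ∈ replace l r N) (hv : v ∈ N) : ¬ solPair q x v := by
  intro hxv
  obtain ⟨w, hwN, z, hz, hzv, hwz, hwv⟩ := hN.witness v hv
  have hs := hr.replace hN.subset hN.consistent
  have hw := hN.insert_subset_replace ha hwN
  by_cases hwx : keyEq l w x
  · exact hwv (hs.2.1 w hw x hx hwx ▸ hxv)
  have hw_ne_z : w ≠ z := fun h => hN.not_mem_replace hr.2.1 hz hv hzv (h ▸ hw)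
  have hvD := hN.subset hv
  exact hwv (hzz D hD w z v x (hs.1 hw) (hr.1 hz) hvD (hs.1 hx) hwx hw_ne_z hzv
    ⟨hs.1 hw, hr.1 hz, hwz⟩ ⟨hs.1 hx, hvD, hxv⟩).2.2

theorem solSet_replace_subset (hzz : ZigZag l q Elem) (hD : D.Finite) (hr : Repair l D r)
    (ha : a ∈ r)
    (hclosed : ∀ v ∈ N, ∀ y ∈ r, (∀ v' ∈ N, ¬ keyEq l y v') → ¬ solPair q v y) :
    solSet q (replace l r N) ⊆ solSet q r := by
  rintro ⟨x, y⟩ ⟨hx, hy | hy, hxy⟩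
  · rcases hx with ⟨hx, -⟩ | hx
    · exact ⟨hx, hy.1, hxy⟩
    · exact absurd hxy (hclosed x hx y hy.1 hy.2)
  · exact absurd hxy (hN.not_solPair_replace hzz hD hr ha hx hy)

theorem exists_insert (hr : Repair l D r) (ha : a ∈ r) (hv : v ∈ N) (hy : y ∈ r)
    (hyN : ∀ v' ∈ N, ¬ keyEq l y v') (hvy : solPair q v y) :
    ∃ v' ∉ N, IsReplacement l q D r a (insert v' N) := by
  have hav : kSet l 2 D {a, v} := kSet_pair le_rfl (hr.1 ha) (hN.subset hv) (hN.not_keyEq v hv)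
  obtain ⟨v', hv'D, hyv', hbad⟩ :=
    exists_keyEq_forall_not_mem_delta hav (hN.not_mem_delta v hv) (hr.1 hy)
  have hya : y ≠ a := by
    rintro rfl
    exact hN.not_mem_delta v hv (mem_delta_of_sat hav ⟨v, y, by simp, by simp, hvy⟩)
  have hav' : ¬ keyEq l a v' := fun h => hya (hr.2.1 a ha y hy (h.trans hyv'.symm)).symm
  have hv'N : ∀ w ∈ N, ¬ keyEq l v' w := fun w hw h => hyN w hw (hyv'.trans h)
  have hvv' : kSet l 2 D {v, v'} :=
    kSet_pair le_rfl (hN.subset hv) hv'D fun h => hv'N v hv h.symm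
  refine ⟨v', fun h => hv'N v' h (keyEq.refl l v'), Set.insert_subset hv'D hN.subset, ?_, ?_, ?_, ?_⟩
  · rintro c (rfl | hc) d (rfl | hd) hcd
    · rfl
    · exact absurd hcd (hv'N d hd)
    · exact absurd hcd.symm (hv'N c hc)
    · exact hN.consistent c hc d hd hcd
  · rintro w (rfl | hw)
    exacts [hav', hN.not_keyEq w hw]
  · rintro w (rfl | hw)
    · exact hbad _ (by simp [Set.insert_subset_iff]) (kSet_pair le_rfl (hr.1 ha) hv'D hav')
    · exact hN.not_mem_delta w hw
  · rintro w (rfl | hw)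
    · exact ⟨v, by simp [hv], y, hy, hyv', hvy,
        not_solPair_of_pair_not_mem_delta hvv' (hbad _ (by simp [Set.insert_subset_iff]) hvv')⟩
    · obtain ⟨w', hw', z, hz, h⟩ := hN.witness w hw
      exact ⟨w', Set.insert_subset_insert (Set.subset_insert v' N) hw', z, hz, h⟩

theorem exists_closed (hD : D.Finite) (hr : Repair l D r) (ha : a ∈ r) :
    ∃ N', N ⊆ N' ∧ IsReplacement l q D r a N' ∧
      ∀ v ∈ N', ∀ y ∈ r, (∀ v' ∈ N', ¬ keyEq l y v') → ¬ solPair q v y := by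
  have hfin : {N' | N ⊆ N' ∧ IsReplacement l q D r a N'}.Finite :=
    hD.finite_subsets.subset fun N' hN' => hN'.2.subset
  obtain ⟨N', ⟨hNN', hN'⟩, hmax⟩ := hfin.exists_maximal ⟨N, subset_rfl, hN⟩
  refine ⟨N', hNN', hN', fun v hv y hy hyN hvy => ?_⟩
  obtain ⟨v', hv'N', hins⟩ := hN'.exists_insert hr ha hv hy hyN hvy
  exact hv'N' (hmax ⟨hNN'.trans (Set.subset_insert v' N'), hins⟩ (Set.subset_insert v' N')
    (Set.mem_insert v' N'))

end IsReplacement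

theorem exists_isReplacement_singleton (hr : Repair l D r) (hab : Sol q r a b)
    (hΔ : {a} ∉ Delta l 2 q D) : ∃ u, keyEq l b u ∧ IsReplacement l q D r a {u} := by
  obtain ⟨ha, hb, hsol⟩ := hab
  have hka : kSet l 2 D {a} := kSet_singleton one_le_two (hr.1 ha)
  have hab : a ≠ b := fun h => hΔ (mem_delta_of_sat hka ⟨a, a, rfl, rfl, h ▸ hsol⟩)
  have hkab : ¬ keyEq l a b := fun h => hab (hr.2.1 a ha b hb h)
  obtain ⟨u, huD, hbu, hbad⟩ := exists_keyEq_forall_not_mem_delta hka hΔ (hr.1 hb)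
  have hau : ¬ keyEq l a u := fun h => hkab (h.trans hbu.symm)
  have hkau := kSet_pair le_rfl (hr.1 ha) huD hau
  have hauΔ : {a, u} ∉ Delta l 2 q D := hbad _ Set.singleton_union.superset hkau
  refine ⟨u, hbu, Set.singleton_subset_iff.2 huD, consistent_singleton l u, ?_, ?_, ?_⟩
  · rintro v rfl
    exact hau
  · rintro v rfl
    exact hauΔ
  · rintro v rfl
    exact ⟨a, Set.mem_insert a _, b, hb, hbu, hsol,
      not_solPair_of_pair_not_mem_delta hkau hauΔ⟩

end CQA

theorem zigzag_repair_step_general (n l : ℕ)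
    (Elem Var : Type)
    (q : CQA.Query n Var) (hzz : CQA.ZigZag l q Elem)
    (D : Set (Fin n → Elem)) (hD : D.Finite)
    (r : Set (Fin n → Elem)) (hr : CQA.Repair l D r)
    (a b : Fin n → Elem) (hab : CQA.Sol q r a b) :
    {a} ∈ CQA.Delta l 2 q D ∨
      ∃ s, CQA.Repair l D s ∧ CQA.solSet q s ⊂ CQA.solSet q r := by
  by_cases hΔ : {a} ∈ CQA.Delta l 2 q D
  · exact Or.inl hΔ
  obtain ⟨u, hbu, hu⟩ := CQA.exists_isReplacement_singleton hr hab hΔ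
  obtain ⟨N, huN, hN, hclosed⟩ := hu.exists_closed hD hr hab.1
  have hsub := hN.solSet_replace_subset hzz hD hr hab.1 hclosed
  refine Or.inr ⟨CQA.replace l r N, hr.replace hN.subset hN.consistent,
    (Set.ssubset_iff_of_subset hsub).2 ⟨(a, b), hab, fun h => ?_⟩⟩
  exact hN.not_mem_replace hr.2.1 hab.2.1 (huN rfl) hbu h.2.1

/-- for a query with the zig-zag property, any solution `(a,b)` of a repair
`r` gives `{a} ∈ Δ₂(q,D)` or a repair with strictly fewer solutions. -/
theorem zigzag_repair_step (n l : ℕ) (hn : 1 ≤ n) (hl : l ≤ n)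
    (Elem Var : Type) [Countable Elem] [Infinite Elem] [Countable Var] [Infinite Var]
    (q : CQA.Query n Var) (hzz : CQA.ZigZag l q Elem)
    (D : Set (Fin n → Elem)) (hD : D.Finite)
    (r : Set (Fin n → Elem)) (hr : CQA.Repair l D r)
    (a b : Fin n → Elem) (hab : CQA.Sol q r a b) :
    {a} ∈ CQA.Delta l 2 q D ∨
      ∃ s, CQA.Repair l D s ∧ CQA.solSet q s ⊂ CQA.solSet q r :=
  zigzag_repair_step_general n l Elem Var q hzz D hD r hr a b hab
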